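/- arXiv:1407.1089 — 9 statements merged into one kernel-verified Lean document; each statement's English description precedes it below -/
import Mathlib

section
/- There is no tuple of integers (a, b_1, ..., b_9) satisfying: 3a = b_1 + ... + b_9, a^2 = b_1^2 + ... + b_9^2 - 3, a ≥ b_1 + b_2 + b_3, and b_1 ≥ b_2 ≥ ... ≥ b_9 ≥ 0. (Equivalently, every reduced class in CP^2 # 9 CP^2-bar with K_st·A ≤ -1 has square ≠ -3; this is the k = 9 step used in Lemma 5.8 of the paper for ruling out b_{10} = 1.) -/
/-- There is no integer tuple (a, b_1, ..., b_9) with 3a = Σ b_i,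
a² = Σ b_i² - 3, a ≥ b_1 + b_2 + b_3 and b_1 ≥ ... ≥ b_9 ≥ 0. -/
theorem stmt1 : ¬ ∃ (a : ℤ) (b : Fin 9 → ℤ),
    3 * a = ∑ i, b i ∧
    a ^ 2 = (∑ i, (b i) ^ 2) - 3 ∧
    b 0 + b 1 + b 2 ≤ a ∧
    (∀ i j : Fin 9, i ≤ j → b j ≤ b i) ∧
    (∀ i, 0 ≤ b i) := by
  rintro ⟨a, b, h1, h2, h3, hs, hn⟩
  simp [Fin.sum_univ_succ,
    show (Fin.succ 2 : Fin 9) = 3 from rfl,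
    show ((Fin.succ 2).succ : Fin 9) = 4 from rfl,
    show ((Fin.succ 2).succ.succ : Fin 9) = 5 from rfl,
    show ((Fin.succ 2).succ.succ.succ : Fin 9) = 6 from rfl,
    show ((Fin.succ 2).succ.succ.succ.succ : Fin 9) = 7 from rfl,
    show ((Fin.succ 2).succ.succ.succ.succ.succ : Fin 9) = 8 from rfl] at h1 h2
  have s01 := hs 0 1 (by decide)
  have s12 := hs 1 2 (by decide)
  have s23 := hs 2 3 (by decide)
  have s34 := hs 3 4 (by decide)
  have s45 := hs 4 5 (by decide)
  have s56 := hs 5 6 (by decide)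
  have s67 := hs 6 7 (by decide)
  have s78 := hs 7 8 (by decide)
  have h8 := hn 8
  have key : b 0 = b 1 ∧ b 1 = b 2 ∧ b 2 = b 3 ∧ b 3 = b 4 ∧ b 4 = b 5 ∧
      b 5 = b 6 ∧ b 6 = b 7 ∧ b 7 = b 8 ∧ a = 3 * b 0 := by omega
  obtain ⟨e1, e2, e3, e4, e5, e6, e7, e8, ea⟩ := key
  rw [← e8, ← e7, ← e6, ← e5, ← e4, ← e3, ← e2, ← e1, ea] at h2
  nlinarith [h2]
end

section
/- Every reduced class A = aH - Σ_{i=1}^9 b_i E_i in H_2(CP^2 # 9 CP^2-bar, Z) has non-negative square, i.e., if b_1 ≥ b_2 ≥ ... ≥ b_9 ≥ 0 and a ≥ b_1 + b_2 + b_3 with a, b_i integers, then a^2 ≥ b_1^2 + ... + b_9^2. -/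
/-- Every reduced class in CP^2 # 9 CP^2-bar has non-negative square. -/
theorem stmt2 (a : ℤ) (b : Fin 9 → ℤ)
    (hmono : ∀ i j : Fin 9, i ≤ j → b j ≤ b i)
    (hnonneg : ∀ i, 0 ≤ b i)
    (hred : b 0 + b 1 + b 2 ≤ a) :
    ∑ i, (b i) ^ 2 ≤ a ^ 2 := by
  have h01 := hmono 0 1 (by decide)
  have h12 := hmono 1 2 (by decide)
  have h23 := hmono 2 3 (by decide)
  have h34 := hmono 3 4 (by decide)
  have h45 := hmono 4 5 (by decide)
  have h56 := hmono 5 6 (by decide)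
  have h67 := hmono 6 7 (by decide)
  have h78 := hmono 7 8 (by decide)
  have n8 := hnonneg 8
  have n7 := hnonneg 7
  have n6 := hnonneg 6
  have n5 := hnonneg 5
  have n4 := hnonneg 4
  have n3 := hnonneg 3
  have k1 : b 3 * b 3 ≤ b 0 * b 1 :=
    mul_le_mul (by linarith) (by linarith) n3 (hnonneg 0)
  have k2 : b 4 * b 4 ≤ b 0 * b 1 :=
    mul_le_mul (by linarith) (by linarith) n4 (hnonneg 0)
  have k3 : b 5 * b 5 ≤ b 0 * b 2 :=
    mul_le_mul (by linarith) (by linarith) n5 (hnonneg 0)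
  have k4 : b 6 * b 6 ≤ b 0 * b 2 :=
    mul_le_mul (by linarith) (by linarith) n6 (hnonneg 0)
  have k5 : b 7 * b 7 ≤ b 1 * b 2 :=
    mul_le_mul (by linarith) (by linarith) n7 (hnonneg 1)
  have k6 : b 8 * b 8 ≤ b 1 * b 2 :=
    mul_le_mul (by linarith) (by linarith) n8 (hnonneg 1)
  have hsum : (∑ i, (b i)^2) = b 0^2 + b 1^2 + b 2^2 + b 3^2 + b 4^2 + b 5^2 + b 6^2 + b 7^2 + b 8^2 := by
    simp [Fin.sum_univ_succ, Fin.succ]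
    ring
  rw [hsum]
  nlinarith [sq_nonneg (a - b 0 - b 1 - b 2), k1, k2, k3, k4, k5, k6,
    hnonneg 0, hnonneg 1, hnonneg 2]
end

section
/- If (a, b_1, ..., b_9) is a tuple of integers with 3a = Σ b_i, a^2 = Σ b_i^2, a ≥ b_1 + b_2 + b_3, and b_1 ≥ b_2 ≥ ... ≥ b_9 ≥ 2, then b_1 = b_2 = ... = b_9 = a/3; i.e., the corresponding class A_9 = aH - Σ b_i E_i equals -m(-3H + Σ_{i=1}^9 E_i) for some integer m ≥ 2. -/
private lemma sum9 (b : Fin 9 → ℤ) :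
    (∑ i, b i) = b 0 + b 1 + b 2 + b 3 + b 4 + b 5 + b 6 + b 7 + b 8 := by
  simp [Fin.sum_univ_succ, show (Fin.succ 2 : Fin 9) = 3 from rfl,
    show ((Fin.succ 2).succ : Fin 9) = 4 from rfl,
    show ((Fin.succ 2).succ.succ : Fin 9) = 5 from rfl,
    show ((Fin.succ 2).succ.succ.succ : Fin 9) = 6 from rfl,
    show ((Fin.succ 2).succ.succ.succ.succ : Fin 9) = 7 from rfl,
    show ((Fin.succ 2).succ.succ.succ.succ.succ : Fin 9) = 8 from rfl]
  ring

/-- A reduced class in CP^2 # 9 CP^2-bar with all b_i ≥ 2, square 0 and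
K_st-pairing 0 is a multiple -m(-3H + Σ E_i), m ≥ 2. -/
theorem stmt3 (a : ℤ) (b : Fin 9 → ℤ)
    (h1 : 3 * a = ∑ i, b i)
    (h2 : a ^ 2 = ∑ i, (b i) ^ 2)
    (h3 : b 0 + b 1 + b 2 ≤ a)
    (hmono : ∀ i j : Fin 9, i ≤ j → b j ≤ b i)
    (h4 : ∀ i, 2 ≤ b i) :
    ∃ m : ℤ, 2 ≤ m ∧ a = 3 * m ∧ ∀ i, b i = m := by
  rw [sum9] at h1
  rw [sum9 (fun i => (b i)^2)] at h2
  have hs : (3*b 0 - a)^2 + (3*b 1 - a)^2 + (3*b 2 - a)^2 + (3*b 3 - a)^2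
      + (3*b 4 - a)^2 + (3*b 5 - a)^2 + (3*b 6 - a)^2 + (3*b 7 - a)^2
      + (3*b 8 - a)^2 = 0 := by
    linear_combination 6*a*h1 - 9*h2
  have n0 := sq_nonneg (3*b 0 - a)
  have n1 := sq_nonneg (3*b 1 - a)
  have n2 := sq_nonneg (3*b 2 - a)
  have n3 := sq_nonneg (3*b 3 - a)
  have n4 := sq_nonneg (3*b 4 - a)
  have n5 := sq_nonneg (3*b 5 - a)
  have n6 := sq_nonneg (3*b 6 - a)
  have n7 := sq_nonneg (3*b 7 - a)
  have n8 := sq_nonneg (3*b 8 - a)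
  have key : ∀ c : ℤ, (3*c - a)^2 = 0 → 3*c = a := by
    intro c hc
    have := pow_eq_zero_iff (n := 2) (by norm_num) |>.mp hc
    linarith [sub_eq_zero.mp this]
  have k0 : 3 * b 0 = a := key _ (le_antisymm (by linarith) n0)
  have k1 : 3 * b 1 = a := key _ (le_antisymm (by linarith) n1)
  have k2 : 3 * b 2 = a := key _ (le_antisymm (by linarith) n2)
  have k3 : 3 * b 3 = a := key _ (le_antisymm (by linarith) n3)
  have k4 : 3 * b 4 = a := key _ (le_antisymm (by linarith) n4)
  have k5 : 3 * b 5 = a := key _ (le_antisymm (by linarith) n5)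
  have k6 : 3 * b 6 = a := key _ (le_antisymm (by linarith) n6)
  have k7 : 3 * b 7 = a := key _ (le_antisymm (by linarith) n7)
  have k8 : 3 * b 8 = a := key _ (le_antisymm (by linarith) n8)
  refine ⟨b 0, h4 0, by omega, fun i => ?_⟩
  fin_cases i
  · rfl
  · show b 1 = b 0; omega
  · show b 2 = b 0; omega
  · show b 3 = b 0; omega
  · show b 4 = b 0; omega
  · show b 5 = b 0; omega
  · show b 6 = b 0; omega
  · show b 7 = b 0; omega
  · show b 8 = b 0; omega
end

section
/- The only integer tuples (a, b_1, b_2, ..., b_k) with a ≥ 0, b_1 ≥ b_2 ≥ ... ≥ b_k ≥ 0, a^2 = Σ b_i^2 - 4, and b_1^2 + b_2^2 + b_3^2 - 4 ≤ a^2 ≤ (3/4)(b_1^2 + b_2^2 + b_3^2) are (listing nonzero entries): (0,1,1,1,1), (1,1,1,1,1,1), (0,2), (1,2,1), (2,2,1,1,1,1), (2,2,2), (3,2,2,2,1), (3,3,2). -/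
section aux

variable {k : ℕ} (b : Fin k → ℤ)

private lemma tail0
    (hnn : ∀ i, 0 ≤ b i)
    (hsum : ∑ i ∈ Finset.univ.filter (fun i : Fin k => 3 ≤ i.val), b i = 0) :
    ∀ i : Fin k, 3 ≤ i.val → b i = 0 := by
  intro i hi
  exact (Finset.sum_eq_zero_iff_of_nonneg (fun j _ => hnn j)).mp hsum i (by simp [hi])

private lemma tail_ex
    {t : ℤ} (ht : t ≠ 0)
    (hsum : ∑ i ∈ Finset.univ.filter (fun i : Fin k => 3 ≤ i.val), b i = t) :
    ∃ j : Fin k, 3 ≤ j.val ∧ b j ≠ 0 := by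
  by_contra h
  push_neg at h
  rw [Finset.sum_eq_zero (fun j hj => h j (by simpa using (Finset.mem_filter.mp hj).2))] at hsum
  exact ht hsum.symm

private lemma tail1
    (hmono : ∀ i j : Fin k, i ≤ j → b j ≤ b i)
    (hnn : ∀ i, 0 ≤ b i)
    (h1 : ∀ i : Fin k, 3 ≤ i.val → b i ≤ 1)
    (hsum : ∑ i ∈ Finset.univ.filter (fun i : Fin k => 3 ≤ i.val), b i = 1) :
    ∀ i : Fin k, 3 ≤ i.val → b i = if i.val = 3 then 1 else 0 := by
  classical
  obtain ⟨j, hjv, hjne⟩ := tail_ex b (by norm_num) hsum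
  have h3k : 3 < k := lt_of_le_of_lt hjv j.isLt
  have hbj : 1 ≤ b j := by have := hnn j; omega
  have he3b : b ⟨3, h3k⟩ = 1 := by
    refine le_antisymm (h1 _ (le_refl 3)) (le_trans hbj (hmono _ j ?_))
    simpa [Fin.le_def] using hjv
  have hrest : ∀ i : Fin k, 4 ≤ i.val → b i = 0 := by
    intro i hi4
    have hne : (⟨3, h3k⟩ : Fin k) ≠ i := by
      simp only [ne_eq, Fin.ext_iff]; omega
    have hsub : ({⟨3, h3k⟩, i} : Finset (Fin k)) ⊆
        Finset.univ.filter (fun i : Fin k => 3 ≤ i.val) := by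
      intro x hx
      simp only [Finset.mem_insert, Finset.mem_singleton] at hx
      rcases hx with rfl | rfl <;> simp <;> omega
    have h2 := Finset.sum_le_sum_of_subset_of_nonneg hsub (fun x _ _ => hnn x)
    rw [Finset.sum_pair hne, hsum] at h2
    have := hnn i
    omega
  intro i hi
  by_cases h3 : i.val = 3
  · rw [if_pos h3, show i = ⟨3, h3k⟩ from Fin.ext (by simpa using h3)]
    exact he3b
  · rw [if_neg h3]
    exact hrest i (by omega)

private lemma tail2
    (hmono : ∀ i j : Fin k, i ≤ j → b j ≤ b i)
    (hnn : ∀ i, 0 ≤ b i)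
    (h1 : ∀ i : Fin k, 3 ≤ i.val → b i ≤ 1)
    (hsum : ∑ i ∈ Finset.univ.filter (fun i : Fin k => 3 ≤ i.val), b i = 2) :
    ∀ i : Fin k, 3 ≤ i.val → b i = if i.val ≤ 4 then 1 else 0 := by
  classical
  obtain ⟨j, hjv, hjne⟩ := tail_ex b (by norm_num) hsum
  have h3k : 3 < k := lt_of_le_of_lt hjv j.isLt
  have hbj : 1 ≤ b j := by have := hnn j; omega
  have he3b : b ⟨3, h3k⟩ = 1 := by
    refine le_antisymm (h1 _ (le_refl 3)) (le_trans hbj (hmono _ j ?_))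
    simpa [Fin.le_def] using hjv
  have he3mem : (⟨3, h3k⟩ : Fin k) ∈ Finset.univ.filter (fun i : Fin k => 3 ≤ i.val) := by simp
  have herase : ∑ i ∈ (Finset.univ.filter (fun i : Fin k => 3 ≤ i.val)).erase ⟨3, h3k⟩, b i = 1 := by
    have h := Finset.sum_erase_add (Finset.univ.filter (fun i : Fin k => 3 ≤ i.val)) b he3mem
    rw [hsum, he3b] at h
    linarith
  obtain ⟨j2, hj2mem, hj2ne⟩ : ∃ j2 ∈ (Finset.univ.filter
      (fun i : Fin k => 3 ≤ i.val)).erase ⟨3, h3k⟩, b j2 ≠ 0 := by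
    by_contra h
    push_neg at h
    rw [Finset.sum_eq_zero h] at herase
    norm_num at herase
  obtain ⟨hj2e3, hj2F⟩ := Finset.mem_erase.mp hj2mem
  have hj2v : 3 ≤ j2.val := by simpa using (Finset.mem_filter.mp hj2F).2
  have hj2v4 : 4 ≤ j2.val := by
    rcases Nat.lt_or_ge j2.val 4 with h | h
    · exact absurd (Fin.ext (by omega : j2.val = (3 : ℕ))) (by simpa using hj2e3)
    · exact h
  have h4k : 4 < k := lt_of_le_of_lt hj2v4 j2.isLt
  have hbj2 : 1 ≤ b j2 := by have := hnn j2; omega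
  have he4b : b ⟨4, h4k⟩ = 1 := by
    refine le_antisymm (h1 _ (by norm_num)) (le_trans hbj2 (hmono _ j2 ?_))
    simpa [Fin.le_def] using hj2v4
  have hrest : ∀ i : Fin k, 5 ≤ i.val → b i = 0 := by
    intro i hi5
    have hne34 : (⟨3, h3k⟩ : Fin k) ≠ ⟨4, h4k⟩ := by simp [Fin.ext_iff]
    have hne3i : (⟨3, h3k⟩ : Fin k) ≠ i := by simp only [ne_eq, Fin.ext_iff]; omega
    have hne4i : (⟨4, h4k⟩ : Fin k) ≠ i := by simp only [ne_eq, Fin.ext_iff]; omega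
    have hsub : ({⟨3, h3k⟩, ⟨4, h4k⟩, i} : Finset (Fin k)) ⊆
        Finset.univ.filter (fun i : Fin k => 3 ≤ i.val) := by
      intro x hx
      simp only [Finset.mem_insert, Finset.mem_singleton] at hx
      rcases hx with rfl | rfl | rfl <;> simp <;> omega
    have hsum3 : ∑ x ∈ ({⟨3, h3k⟩, ⟨4, h4k⟩, i} : Finset (Fin k)), b x
        = b ⟨3, h3k⟩ + (b ⟨4, h4k⟩ + b i) := by
      rw [Finset.sum_insert (by simp only [Finset.mem_insert, Finset.mem_singleton]; tauto),
        Finset.sum_insert (by simpa using hne4i), Finset.sum_singleton]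
    have h2 := Finset.sum_le_sum_of_subset_of_nonneg hsub (fun x _ _ => hnn x)
    rw [hsum3, hsum] at h2
    have := hnn i
    omega
  intro i hi
  by_cases h34 : i.val ≤ 4
  · rw [if_pos h34]
    by_cases h3 : i.val = 3
    · rw [show i = ⟨3, h3k⟩ from Fin.ext (by simpa using h3)]; exact he3b
    · rw [show i = ⟨4, h4k⟩ from Fin.ext (by simp; omega)]; exact he4b
  · rw [if_neg h34]
    exact hrest i (by omega)

private lemma sq_enum4 (x q : ℤ) (h0 : 0 ≤ x) (h4 : x ≤ 4) (hq : q = x ^ 2) :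
    (x = 0 ∧ q = 0) ∨ (x = 1 ∧ q = 1) ∨ (x = 2 ∧ q = 4) ∨ (x = 3 ∧ q = 9) ∨ (x = 4 ∧ q = 16) := by
  interval_cases x <;> norm_num at hq <;> omega

private lemma sq_enum3 (x q : ℤ) (h0 : 0 ≤ x) (h3 : x ≤ 3) (hq : q = x ^ 2) :
    (x = 0 ∧ q = 0) ∨ (x = 1 ∧ q = 1) ∨ (x = 2 ∧ q = 4) ∨ (x = 3 ∧ q = 9) := by
  interval_cases x <;> norm_num at hq <;> omega

set_option synthInstance.maxSize 4000 in
set_option synthInstance.maxHeartbeats 2000000 in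
set_option maxHeartbeats 2000000 in
private lemma core_cases : ∀ B0 B1 B2 T : Fin 5, ∀ a : Fin 4,
    B2.val ≤ B1.val → B1.val ≤ B0.val →
    a.val ^ 2 + 4 = B0.val ^ 2 + B1.val ^ 2 + B2.val ^ 2 + T.val →
    B0.val ^ 2 + B1.val ^ 2 + B2.val ^ 2 + 4 * T.val ≤ 16 →
    (T.val = 0 ∨ 1 ≤ B2.val) →
    ((B0.val = 1 ∧ B1.val = 1 ∧ B2.val = 1 ∧ T.val = 1 ∧ a.val = 0) ∨
      (B0.val = 1 ∧ B1.val = 1 ∧ B2.val = 1 ∧ T.val = 2 ∧ a.val = 1) ∨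
      (B0.val = 2 ∧ B1.val = 0 ∧ B2.val = 0 ∧ T.val = 0 ∧ a.val = 0) ∨
      (B0.val = 2 ∧ B1.val = 1 ∧ B2.val = 0 ∧ T.val = 0 ∧ a.val = 1) ∨
      (B0.val = 2 ∧ B1.val = 1 ∧ B2.val = 1 ∧ T.val = 2 ∧ a.val = 2) ∨
      (B0.val = 2 ∧ B1.val = 2 ∧ B2.val = 0 ∧ T.val = 0 ∧ a.val = 2) ∨
      (B0.val = 2 ∧ B1.val = 2 ∧ B2.val = 2 ∧ T.val = 1 ∧ a.val = 3) ∨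
      (B0.val = 3 ∧ B1.val = 2 ∧ B2.val = 0 ∧ T.val = 0 ∧ a.val = 3)) := by decide

end aux

set_option maxHeartbeats 1000000 in
/-- Enumeration of integer tuples (a, b₁ ≥ ... ≥ b_k ≥ 0), a ≥ 0, with
a² = Σ b_i² - 4 and b₁² + b₂² + b₃² - 4 ≤ a² ≤ (3/4)(b₁² + b₂² + b₃²). -/
theorem stmt6 (k : ℕ) (hk : 3 ≤ k) (a : ℤ) (b : Fin k → ℤ) (ha : 0 ≤ a)
    (hmono : ∀ i j : Fin k, i ≤ j → b j ≤ b i)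
    (hnonneg : ∀ i, 0 ≤ b i)
    (hsq : a ^ 2 = (∑ i, (b i) ^ 2) - 4)
    (hlow : (b ⟨0, by omega⟩) ^ 2 + (b ⟨1, by omega⟩) ^ 2 + (b ⟨2, by omega⟩) ^ 2 - 4 ≤ a ^ 2)
    (hup : 4 * a ^ 2 ≤ 3 * ((b ⟨0, by omega⟩) ^ 2 + (b ⟨1, by omega⟩) ^ 2 + (b ⟨2, by omega⟩) ^ 2)) :
    ∃ p : ℤ × List ℤ,
      p ∈ [((0 : ℤ), [(1 : ℤ), 1, 1, 1]), (1, [1, 1, 1, 1, 1]), (0, [2]), (1, [2, 1]),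
           (2, [2, 1, 1, 1, 1]), (2, [2, 2]), (3, [2, 2, 2, 1]), (3, [3, 2])] ∧
      a = p.1 ∧ ∀ i : Fin k, b i = p.2.getD i.val 0 := by
  classical
  have h0k : 0 < k := by omega
  have h1k : 1 < k := by omega
  have h2k : 2 < k := by omega
  have hup' : 4 * a ^ 2 ≤ 3 * (b ⟨0, h0k⟩ ^ 2 + b ⟨1, h1k⟩ ^ 2 + b ⟨2, h2k⟩ ^ 2) := hup
  -- split the sum
  have huniv : (Finset.univ : Finset (Fin k)) =
      insert ⟨0, h0k⟩ (insert ⟨1, h1k⟩ (insert ⟨2, h2k⟩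
        (Finset.univ.filter (fun i : Fin k => 3 ≤ i.val)))) := by
    ext i
    simp only [Finset.mem_univ, Finset.mem_insert, Finset.mem_filter, true_and, true_iff,
      Fin.ext_iff]
    omega
  have hsplit : ∑ i, b i ^ 2 = b ⟨0, h0k⟩ ^ 2 + b ⟨1, h1k⟩ ^ 2 + b ⟨2, h2k⟩ ^ 2 +
      ∑ i ∈ Finset.univ.filter (fun i : Fin k => 3 ≤ i.val), b i ^ 2 := by
    conv_lhs => rw [huniv]
    rw [Finset.sum_insert, Finset.sum_insert, Finset.sum_insert]
    · ring
    · simp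
    · simp [Fin.ext_iff]
    · simp [Fin.ext_iff]
  have hsum0 : a ^ 2 = b ⟨0, h0k⟩ ^ 2 + b ⟨1, h1k⟩ ^ 2 + b ⟨2, h2k⟩ ^ 2 +
      (∑ i ∈ Finset.univ.filter (fun i : Fin k => 3 ≤ i.val), b i ^ 2) - 4 := by
    rw [hsq, hsplit]
  have hbound0 : b ⟨0, h0k⟩ ^ 2 + b ⟨1, h1k⟩ ^ 2 + b ⟨2, h2k⟩ ^ 2 +
      4 * (∑ i ∈ Finset.univ.filter (fun i : Fin k => 3 ≤ i.val), b i ^ 2) ≤ 16 := by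
    linarith
  -- tail entries are at most 1
  have htail1 : ∀ i : Fin k, 3 ≤ i.val → b i ≤ 1 := by
    intro i hi
    by_contra hcon
    push_neg at hcon
    have h2le : 2 ≤ b i := hcon
    have hsq4 : 4 ≤ b i ^ 2 := by nlinarith
    have hsingle : b i ^ 2 ≤ ∑ j ∈ Finset.univ.filter (fun j : Fin k => 3 ≤ j.val), b j ^ 2 :=
      Finset.single_le_sum (fun j _ => sq_nonneg (b j)) (by simp [hi])
    have hb0 : b i ≤ b ⟨0, h0k⟩ := hmono _ i (by simp [Fin.le_def])
    have hb1 : b i ≤ b ⟨1, h1k⟩ := hmono _ i (by simp [Fin.le_def]; omega)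
    have hb2 : b i ≤ b ⟨2, h2k⟩ := hmono _ i (by simp [Fin.le_def]; omega)
    have hp0 : b i ^ 2 ≤ b ⟨0, h0k⟩ ^ 2 := pow_le_pow_left₀ (hnonneg i) hb0 2
    have hp1 : b i ^ 2 ≤ b ⟨1, h1k⟩ ^ 2 := pow_le_pow_left₀ (hnonneg i) hb1 2
    have hp2 : b i ^ 2 ≤ b ⟨2, h2k⟩ ^ 2 := pow_le_pow_left₀ (hnonneg i) hb2 2
    linarith
  -- linearize tail sum
  have hTlin : ∑ i ∈ Finset.univ.filter (fun i : Fin k => 3 ≤ i.val), b i ^ 2 =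
      ∑ i ∈ Finset.univ.filter (fun i : Fin k => 3 ≤ i.val), b i := by
    refine Finset.sum_congr rfl (fun i hi => ?_)
    have hi3 : 3 ≤ i.val := by simpa using (Finset.mem_filter.mp hi).2
    have h1 := htail1 i hi3
    have h0 := hnonneg i
    have : b i = 0 ∨ b i = 1 := by omega
    rcases this with h | h <;> rw [h] <;> norm_num
  rw [hTlin] at hsum0 hbound0
  have hd0 : 0 < ∑ i ∈ Finset.univ.filter (fun i : Fin k => 3 ≤ i.val), b i →
      1 ≤ b ⟨2, h2k⟩ := by
    intro hpos
    by_contra hcon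
    push_neg at hcon
    have hz : b ⟨2, h2k⟩ = 0 := by have := hnonneg ⟨2, h2k⟩; omega
    have : ∑ i ∈ Finset.univ.filter (fun i : Fin k => 3 ≤ i.val), b i ≤ 0 := by
      refine Finset.sum_nonpos (fun i hi => ?_)
      have hi3 : 3 ≤ i.val := by simpa using (Finset.mem_filter.mp hi).2
      have := hmono ⟨2, h2k⟩ i (by simp [Fin.le_def]; omega)
      omega
    omega
  have hTnn : 0 ≤ ∑ i ∈ Finset.univ.filter (fun i : Fin k => 3 ≤ i.val), b i :=
    Finset.sum_nonneg (fun i _ => hnonneg i)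
  -- bounds for the head entries and a
  have hB0le : b ⟨0, h0k⟩ ≤ 4 := by
    by_contra hcon
    push_neg at hcon
    nlinarith [sq_nonneg (b ⟨1, h1k⟩), sq_nonneg (b ⟨2, h2k⟩), hnonneg ⟨0, h0k⟩]
  have ha3 : a ≤ 3 := by
    by_contra hcon
    push_neg at hcon
    nlinarith
  -- generalize
  obtain ⟨T, hgT⟩ : ∃ x, ∑ i ∈ Finset.univ.filter (fun i : Fin k => 3 ≤ i.val), b i = x :=
    ⟨_, rfl⟩
  rw [hgT] at hsum0 hbound0 hd0 hTnn
  obtain ⟨B0, hg0⟩ : ∃ x, b ⟨0, h0k⟩ = x := ⟨_, rfl⟩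
  obtain ⟨B1, hg1⟩ : ∃ x, b ⟨1, h1k⟩ = x := ⟨_, rfl⟩
  obtain ⟨B2, hg2⟩ : ∃ x, b ⟨2, h2k⟩ = x := ⟨_, rfl⟩
  rw [hg0, hg1, hg2] at hsum0 hbound0
  rw [hg2] at hd0
  have hb01 : B1 ≤ B0 := by rw [← hg0, ← hg1]; exact hmono _ _ (by simp [Fin.le_def])
  have hb12 : B2 ≤ B1 := by rw [← hg1, ← hg2]; exact hmono _ _ (by simp [Fin.le_def])
  have hb2nn : 0 ≤ B2 := by rw [← hg2]; exact hnonneg _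
  have hb1nn : 0 ≤ B1 := le_trans hb2nn hb12
  have hb0nn : 0 ≤ B0 := le_trans hb1nn hb01
  have hB0le' : B0 ≤ 4 := by rw [← hg0]; exact hB0le
  have hT4 : T ≤ 4 := by nlinarith [sq_nonneg B0, sq_nonneg B1, sq_nonneg B2]
  have hnat : a.toNat ^ 2 + 4 = B0.toNat ^ 2 + B1.toNat ^ 2 + B2.toNat ^ 2 + T.toNat := by
    have h : ((a.toNat ^ 2 + 4 : ℕ) : ℤ) =
        ((B0.toNat ^ 2 + B1.toNat ^ 2 + B2.toNat ^ 2 + T.toNat : ℕ) : ℤ) := by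
      push_cast [Int.toNat_of_nonneg ha, Int.toNat_of_nonneg hb0nn, Int.toNat_of_nonneg hb1nn,
        Int.toNat_of_nonneg hb2nn, Int.toNat_of_nonneg hTnn]
      linarith [hsum0]
    exact_mod_cast h
  have hnatb : B0.toNat ^ 2 + B1.toNat ^ 2 + B2.toNat ^ 2 + 4 * T.toNat ≤ 16 := by
    have h : ((B0.toNat ^ 2 + B1.toNat ^ 2 + B2.toNat ^ 2 + 4 * T.toNat : ℕ) : ℤ) ≤
        ((16 : ℕ) : ℤ) := by
      push_cast [Int.toNat_of_nonneg hb0nn, Int.toNat_of_nonneg hb1nn,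
        Int.toNat_of_nonneg hb2nn, Int.toNat_of_nonneg hTnn]
      linarith [hbound0]
    exact_mod_cast h
  have hdn : T.toNat = 0 ∨ 1 ≤ B2.toNat := by omega
  have hcore' : (B0.toNat = 1 ∧ B1.toNat = 1 ∧ B2.toNat = 1 ∧ T.toNat = 1 ∧ a.toNat = 0) ∨
      (B0.toNat = 1 ∧ B1.toNat = 1 ∧ B2.toNat = 1 ∧ T.toNat = 2 ∧ a.toNat = 1) ∨
      (B0.toNat = 2 ∧ B1.toNat = 0 ∧ B2.toNat = 0 ∧ T.toNat = 0 ∧ a.toNat = 0) ∨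
      (B0.toNat = 2 ∧ B1.toNat = 1 ∧ B2.toNat = 0 ∧ T.toNat = 0 ∧ a.toNat = 1) ∨
      (B0.toNat = 2 ∧ B1.toNat = 1 ∧ B2.toNat = 1 ∧ T.toNat = 2 ∧ a.toNat = 2) ∨
      (B0.toNat = 2 ∧ B1.toNat = 2 ∧ B2.toNat = 0 ∧ T.toNat = 0 ∧ a.toNat = 2) ∨
      (B0.toNat = 2 ∧ B1.toNat = 2 ∧ B2.toNat = 2 ∧ T.toNat = 1 ∧ a.toNat = 3) ∨
      (B0.toNat = 3 ∧ B1.toNat = 2 ∧ B2.toNat = 0 ∧ T.toNat = 0 ∧ a.toNat = 3) :=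
    core_cases ⟨B0.toNat, by omega⟩ ⟨B1.toNat, by omega⟩ ⟨B2.toNat, by omega⟩
      ⟨T.toNat, by omega⟩ ⟨a.toNat, by omega⟩ (show B2.toNat ≤ B1.toNat by omega)
      (show B1.toNat ≤ B0.toNat by omega) hnat hnatb hdn
  rcases hcore' with ⟨n0, n1, n2, nT, na⟩ | ⟨n0, n1, n2, nT, na⟩ | ⟨n0, n1, n2, nT, na⟩ |
    ⟨n0, n1, n2, nT, na⟩ | ⟨n0, n1, n2, nT, na⟩ | ⟨n0, n1, n2, nT, na⟩ |
    ⟨n0, n1, n2, nT, na⟩ | ⟨n0, n1, n2, nT, na⟩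
  -- (0, [1,1,1,1])
  · have e0 : B0 = 1 := by omega
    have e1 : B1 = 1 := by omega
    have e2 : B2 = 1 := by omega
    have eT : T = 1 := by omega
    have ea : a = 0 := by omega
    subst e0 e1 e2 eT ea
    refine ⟨((0 : ℤ), [1, 1, 1, 1]), by norm_num, rfl, ?_⟩
    have htd := tail1 b hmono hnonneg htail1 hgT
    rintro ⟨iv, hiv⟩
    rcases Nat.lt_or_ge iv 3 with hlt | hge
    · interval_cases iv
      · exact hg0
      · exact hg1
      · exact hg2
    · have hbi : b ⟨iv, hiv⟩ = (if iv = 3 then 1 else 0 : ℤ) := htd ⟨iv, hiv⟩ hge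
      show b ⟨iv, hiv⟩ = List.getD [(1 : ℤ), 1, 1, 1] iv 0
      rcases Nat.lt_or_ge iv 4 with h4 | h4
      · have h3 : iv = 3 := by omega
        subst h3
        simpa using hbi
      · rw [hbi, if_neg (by omega), List.getD_eq_default _ _ (by simp; omega)]
  -- (1, [1,1,1,1,1])
  · have e0 : B0 = 1 := by omega
    have e1 : B1 = 1 := by omega
    have e2 : B2 = 1 := by omega
    have eT : T = 2 := by omega
    have ea : a = 1 := by omega
    subst e0 e1 e2 eT ea
    refine ⟨((1 : ℤ), [1, 1, 1, 1, 1]), by norm_num, rfl, ?_⟩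
    have htd := tail2 b hmono hnonneg htail1 hgT
    rintro ⟨iv, hiv⟩
    rcases Nat.lt_or_ge iv 3 with hlt | hge
    · interval_cases iv
      · exact hg0
      · exact hg1
      · exact hg2
    · have hbi : b ⟨iv, hiv⟩ = (if iv ≤ 4 then 1 else 0 : ℤ) := htd ⟨iv, hiv⟩ hge
      show b ⟨iv, hiv⟩ = List.getD [(1 : ℤ), 1, 1, 1, 1] iv 0
      rcases Nat.lt_or_ge iv 5 with h5 | h5
      · interval_cases iv <;> simpa using hbi
      · rw [hbi, if_neg (by omega), List.getD_eq_default _ _ (by simp; omega)]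
  -- (0, [2])
  · have e0 : B0 = 2 := by omega
    have e1 : B1 = 0 := by omega
    have e2 : B2 = 0 := by omega
    have eT : T = 0 := by omega
    have ea : a = 0 := by omega
    subst e0 e1 e2 eT ea
    refine ⟨((0 : ℤ), [2]), by norm_num, rfl, ?_⟩
    have htd := tail0 b hnonneg hgT
    rintro ⟨iv, hiv⟩
    rcases Nat.lt_or_ge iv 3 with hlt | hge
    · interval_cases iv
      · exact hg0
      · exact hg1
      · exact hg2
    · have hbi : b ⟨iv, hiv⟩ = 0 := htd ⟨iv, hiv⟩ hge
      show b ⟨iv, hiv⟩ = List.getD [(2 : ℤ)] iv 0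
      rw [hbi, List.getD_eq_default _ _ (by simp; omega)]
  -- (1, [2,1])
  · have e0 : B0 = 2 := by omega
    have e1 : B1 = 1 := by omega
    have e2 : B2 = 0 := by omega
    have eT : T = 0 := by omega
    have ea : a = 1 := by omega
    subst e0 e1 e2 eT ea
    refine ⟨((1 : ℤ), [2, 1]), by norm_num, rfl, ?_⟩
    have htd := tail0 b hnonneg hgT
    rintro ⟨iv, hiv⟩
    rcases Nat.lt_or_ge iv 3 with hlt | hge
    · interval_cases iv
      · exact hg0
      · exact hg1
      · exact hg2
    · have hbi : b ⟨iv, hiv⟩ = 0 := htd ⟨iv, hiv⟩ hge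
      show b ⟨iv, hiv⟩ = List.getD [(2 : ℤ), 1] iv 0
      rw [hbi, List.getD_eq_default _ _ (by simp; omega)]
  -- (2, [2,1,1,1,1])
  · have e0 : B0 = 2 := by omega
    have e1 : B1 = 1 := by omega
    have e2 : B2 = 1 := by omega
    have eT : T = 2 := by omega
    have ea : a = 2 := by omega
    subst e0 e1 e2 eT ea
    refine ⟨((2 : ℤ), [2, 1, 1, 1, 1]), by norm_num, rfl, ?_⟩
    have htd := tail2 b hmono hnonneg htail1 hgT
    rintro ⟨iv, hiv⟩
    rcases Nat.lt_or_ge iv 3 with hlt | hge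
    · interval_cases iv
      · exact hg0
      · exact hg1
      · exact hg2
    · have hbi : b ⟨iv, hiv⟩ = (if iv ≤ 4 then 1 else 0 : ℤ) := htd ⟨iv, hiv⟩ hge
      show b ⟨iv, hiv⟩ = List.getD [(2 : ℤ), 1, 1, 1, 1] iv 0
      rcases Nat.lt_or_ge iv 5 with h5 | h5
      · interval_cases iv <;> simpa using hbi
      · rw [hbi, if_neg (by omega), List.getD_eq_default _ _ (by simp; omega)]
  -- (2, [2,2])
  · have e0 : B0 = 2 := by omega
    have e1 : B1 = 2 := by omega
    have e2 : B2 = 0 := by omega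
    have eT : T = 0 := by omega
    have ea : a = 2 := by omega
    subst e0 e1 e2 eT ea
    refine ⟨((2 : ℤ), [2, 2]), by norm_num, rfl, ?_⟩
    have htd := tail0 b hnonneg hgT
    rintro ⟨iv, hiv⟩
    rcases Nat.lt_or_ge iv 3 with hlt | hge
    · interval_cases iv
      · exact hg0
      · exact hg1
      · exact hg2
    · have hbi : b ⟨iv, hiv⟩ = 0 := htd ⟨iv, hiv⟩ hge
      show b ⟨iv, hiv⟩ = List.getD [(2 : ℤ), 2] iv 0
      rw [hbi, List.getD_eq_default _ _ (by simp; omega)]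
  -- (3, [2,2,2,1])
  · have e0 : B0 = 2 := by omega
    have e1 : B1 = 2 := by omega
    have e2 : B2 = 2 := by omega
    have eT : T = 1 := by omega
    have ea : a = 3 := by omega
    subst e0 e1 e2 eT ea
    refine ⟨((3 : ℤ), [2, 2, 2, 1]), by norm_num, rfl, ?_⟩
    have htd := tail1 b hmono hnonneg htail1 hgT
    rintro ⟨iv, hiv⟩
    rcases Nat.lt_or_ge iv 3 with hlt | hge
    · interval_cases iv
      · exact hg0
      · exact hg1
      · exact hg2
    · have hbi : b ⟨iv, hiv⟩ = (if iv = 3 then 1 else 0 : ℤ) := htd ⟨iv, hiv⟩ hge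
      show b ⟨iv, hiv⟩ = List.getD [(2 : ℤ), 2, 2, 1] iv 0
      rcases Nat.lt_or_ge iv 4 with h4 | h4
      · have h3 : iv = 3 := by omega
        subst h3
        simpa using hbi
      · rw [hbi, if_neg (by omega), List.getD_eq_default _ _ (by simp; omega)]
  -- (3, [3,2])
  · have e0 : B0 = 3 := by omega
    have e1 : B1 = 2 := by omega
    have e2 : B2 = 0 := by omega
    have eT : T = 0 := by omega
    have ea : a = 3 := by omega
    subst e0 e1 e2 eT ea
    refine ⟨((3 : ℤ), [3, 2]), by norm_num, rfl, ?_⟩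
    have htd := tail0 b hnonneg hgT
    rintro ⟨iv, hiv⟩
    rcases Nat.lt_or_ge iv 3 with hlt | hge
    · interval_cases iv
      · exact hg0
      · exact hg1
      · exact hg2
    · have hbi : b ⟨iv, hiv⟩ = 0 := htd ⟨iv, hiv⟩ hge
      show b ⟨iv, hiv⟩ = List.getD [(3 : ℤ), 2] iv 0
      rw [hbi, List.getD_eq_default _ _ (by simp; omega)]
end

section
/- There is no real solution (a, b_1, ..., b_k) with k ≥ 11 to the system: 3a = Σ_{i=1}^k b_i - d, a^2 = Σ_{i=1}^k b_i^2 - 4, a ≥ b_1 + b_2 + b_3, b_1 ≥ b_2 ≥ ... ≥ b_k ≥ 1, when d ≤ 2. -/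
set_option maxHeartbeats 1000000 in
/-- No real solution to 3a = Σ b_i - d, a² = Σ b_i² - 4, a ≥ b₁ + b₂ + b₃,
b₁ ≥ ... ≥ b_k ≥ 1 when k ≥ 11 and d ≤ 2. -/
theorem stmt8 (k : ℕ) (hk : 11 ≤ k) : ¬ ∃ (a d : ℝ) (b : Fin k → ℝ),
    d ≤ 2 ∧
    3 * a = (∑ i, b i) - d ∧
    a ^ 2 = (∑ i, (b i) ^ 2) - 4 ∧
    b ⟨0, by omega⟩ + b ⟨1, by omega⟩ + b ⟨2, by omega⟩ ≤ a ∧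
    (∀ i j : Fin k, i ≤ j → b j ≤ b i) ∧
    (∀ i, 1 ≤ b i) := by
  rintro ⟨a, d, b, hd, hS, hQ, ha, hmono, hb1⟩
  set i0 : Fin k := ⟨0, by omega⟩ with hi0def
  set i1 : Fin k := ⟨1, by omega⟩ with hi1def
  set i2 : Fin k := ⟨2, by omega⟩ with hi2def
  set x := b i0 with hx
  set y := b i1 with hy
  set z := b i2 with hz
  have hxy : y ≤ x := hmono i0 i1 (by simp [hi0def, hi1def, Fin.le_def])
  have hyz : z ≤ y := hmono i1 i2 (by simp [hi1def, hi2def, Fin.le_def])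
  have hz1 : (1 : ℝ) ≤ z := hb1 i2
  -- pointwise bound
  have hpt : ∀ i : Fin k, (b i - z) * (b i - 1) ≤
      (if i = i0 then (x - z) * (x - 1) else if i = i1 then (y - z) * (y - 1) else 0) := by
    intro i
    have hne : i1 ≠ i0 := by simp only [hi0def, hi1def, ne_eq, Fin.mk.injEq]; omega
    by_cases h0 : i = i0
    · simp [h0, hx]
    · by_cases h1 : i = i1
      · simp [h0, h1, hy, hne]
      · simp only [h0, h1, if_false]
        have hv0 : i.val ≠ 0 := fun h => h0 (Fin.ext h)
        have hv1 : i.val ≠ 1 := fun h => h1 (Fin.ext h)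
        have hle : i2 ≤ i := by simp only [Fin.le_def, hi2def]; omega
        have hbz : b i ≤ z := hmono i2 i hle
        have hb1i : (1 : ℝ) ≤ b i := hb1 i
        nlinarith
  have hsum : ∑ i, ((b i - z) * (b i - 1)) ≤ (x - z) * (x - 1) + (y - z) * (y - 1) := by
    calc ∑ i, ((b i - z) * (b i - 1))
        ≤ ∑ i, (if i = i0 then (x - z) * (x - 1) else if i = i1 then (y - z) * (y - 1) else 0) :=
          Finset.sum_le_sum (fun i _ => hpt i)
      _ = ∑ i, ((if i = i0 then (x - z) * (x - 1) else 0)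
            + (if i = i1 then (y - z) * (y - 1) else 0)) := by
          apply Finset.sum_congr rfl
          intro i _
          by_cases h0 : i = i0
          · have h1 : i ≠ i1 := by
              subst h0; simp only [hi0def, hi1def, ne_eq, Fin.mk.injEq]; omega
            have h01 : i0 ≠ i1 := fun h => h1 (h0 ▸ h)
            simp [h0, h1, h01]
          · simp [h0]
      _ = (x - z) * (x - 1) + (y - z) * (y - 1) := by
          rw [Finset.sum_add_distrib]
          simp [Finset.sum_ite_eq']
  have expand : ∑ i, ((b i - z) * (b i - 1))
      = (∑ i, (b i) ^ 2) - (z + 1) * (∑ i, b i) + (k : ℝ) * z := by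
    have h : ∀ i : Fin k, (b i - z) * (b i - 1) = (b i) ^ 2 - (z + 1) * (b i) + z := by
      intro i; ring
    simp_rw [h]
    rw [Finset.sum_add_distrib, Finset.sum_sub_distrib, ← Finset.mul_sum, Finset.sum_const,
      Finset.card_univ, Fintype.card_fin, nsmul_eq_mul]
  have key : (∑ i, (b i) ^ 2) - (z + 1) * (∑ i, b i) + (k : ℝ) * z
      ≤ (x - z) * (x - 1) + (y - z) * (y - 1) := expand ▸ hsum
  have hkr : (11 : ℝ) ≤ (k : ℝ) := by exact_mod_cast hk
  -- nonnegative products (certificate)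
  have c1 : 0 ≤ 2 * (x - 1) * (y - z) := mul_nonneg (by linarith) (by linarith)
  have c2 : 0 ≤ 2 * (z - 1) * (x - z) := mul_nonneg (by linarith) (by linarith)
  have c3 : 0 ≤ 2 * (a - x - y - z) * (x - z) := mul_nonneg (by linarith) (by linarith)
  have c4 : 0 ≤ 2 * (a - x - y - z) * (y - z) := mul_nonneg (by linarith) (by linarith)
  have c5 : 0 ≤ 3 * (a - x - y - z) * (z - 1) := mul_nonneg (by linarith) (by linarith)
  have c6 : 0 ≤ (a - x - y - z) ^ 2 := sq_nonneg _
  have c7 : 0 ≤ (z + 1) * (2 - d) := mul_nonneg (by linarith) (by linarith)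
  have c8 : 0 ≤ z * ((k : ℝ) - 11) := mul_nonneg (by linarith) (by linarith)
  have hSb : (∑ i, b i) = 3 * a + d := by linarith
  have hQb : (∑ i, (b i) ^ 2) = a ^ 2 + 4 := by linarith
  rw [hSb, hQb] at key
  have idt : a ^ 2 + 4 - (z + 1) * (3 * a + d) + (k : ℝ) * z
      = (x - z) * (x - 1) + (y - z) * (y - 1)
        + (2 * (x - 1) * (y - z) + 2 * (z - 1) * (x - z) + 2 * (a - x - y - z) * (x - z)
          + 2 * (a - x - y - z) * (y - z) + 3 * (a - x - y - z) * (z - 1)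
          + (a - x - y - z) ^ 2 + (z + 1) * (2 - d) + z * ((k : ℝ) - 11) + 2) := by ring
  linarith [key, c1, c2, c3, c4, c5, c6, c7, c8, idt.ge, idt.le]
end

section
/- There is no real solution (a, b_1, ..., b_{10}) to the system: 3a = Σ_{i=1}^{10} b_i - d, a^2 = Σ_{i=1}^{10} b_i^2 - 4, a ≥ b_1 + b_2 + b_3, b_1 ≥ ... ≥ b_{10} ≥ 1, when d ≤ 1. -/
/-- No real solution to 3a = Σ b_i - d, a² = Σ b_i² - 4, a ≥ b₁ + b₂ + b₃,
b₁ ≥ ... ≥ b₁₀ ≥ 1 when d ≤ 1. -/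
theorem stmt9 : ¬ ∃ (a d : ℝ) (b : Fin 10 → ℝ),
    d ≤ 1 ∧
    3 * a = (∑ i, b i) - d ∧
    a ^ 2 = (∑ i, (b i) ^ 2) - 4 ∧
    b 0 + b 1 + b 2 ≤ a ∧
    (∀ i j : Fin 10, i ≤ j → b j ≤ b i) ∧
    (∀ i, 1 ≤ b i) := by
  rintro ⟨a, d, b, hd, hsum, hsq, htop, hsort, hone⟩
  simp only [Fin.sum_univ_succ, Fin.sum_univ_zero] at hsum hsq
  have hsum' : 3 * a = b 0 + (b 1 + (b 2 + (b 3 + (b 4 + (b 5 + (b 6 + (b 7 +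
      (b 8 + (b 9 + 0))))))))) - d := hsum
  have hsq' : a ^ 2 = b 0 ^ 2 + (b 1 ^ 2 + (b 2 ^ 2 + (b 3 ^ 2 + (b 4 ^ 2 + (b 5 ^ 2 +
      (b 6 ^ 2 + (b 7 ^ 2 + (b 8 ^ 2 + (b 9 ^ 2 + 0))))))))) - 4 := hsq
  clear hsum hsq
  have t3 : 0 ≤ (b 3 - 1) * (b 2 - b 3) :=
    mul_nonneg (by linarith [hone 3]) (by linarith [hsort 2 3 (by decide)])
  have t4 : 0 ≤ (b 4 - 1) * (b 2 - b 4) :=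
    mul_nonneg (by linarith [hone 4]) (by linarith [hsort 2 4 (by decide)])
  have t5 : 0 ≤ (b 5 - 1) * (b 2 - b 5) :=
    mul_nonneg (by linarith [hone 5]) (by linarith [hsort 2 5 (by decide)])
  have t6 : 0 ≤ (b 6 - 1) * (b 2 - b 6) :=
    mul_nonneg (by linarith [hone 6]) (by linarith [hsort 2 6 (by decide)])
  have t7 : 0 ≤ (b 7 - 1) * (b 2 - b 7) :=
    mul_nonneg (by linarith [hone 7]) (by linarith [hsort 2 7 (by decide)])
  have t8 : 0 ≤ (b 8 - 1) * (b 2 - b 8) :=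
    mul_nonneg (by linarith [hone 8]) (by linarith [hsort 2 8 (by decide)])
  have t9 : 0 ≤ (b 9 - 1) * (b 2 - b 9) :=
    mul_nonneg (by linarith [hone 9]) (by linarith [hsort 2 9 (by decide)])
  have hu : 0 ≤ a - b 0 - b 1 - b 2 := by linarith
  have hxz : 0 ≤ b 0 - b 2 := by linarith [hsort 0 2 (by decide)]
  have hyz : 0 ≤ b 1 - b 2 := by linarith [hsort 1 2 (by decide)]
  have hy1 : 0 ≤ b 1 - 1 := by linarith [hone 1]
  have hz1 : 0 ≤ b 2 - 1 := by linarith [hone 2]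
  have p1 : 0 ≤ (b 0 - b 2) * (b 1 - 1) := mul_nonneg hxz hy1
  have p2 : 0 ≤ (b 2 - 1) * (b 1 - b 2) := mul_nonneg hz1 hyz
  have p3 : 0 ≤ (a - b 0 - b 1 - b 2) ^ 2 := sq_nonneg _
  have p4 : 0 ≤ (a - b 0 - b 1 - b 2) * (b 0 - b 2) := mul_nonneg hu hxz
  have p5 : 0 ≤ (a - b 0 - b 1 - b 2) * (b 1 - b 2) := mul_nonneg hu hyz
  have p6 : 0 ≤ (a - b 0 - b 1 - b 2) * (b 2 - 1) := mul_nonneg hu hz1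
  have p7 : 0 ≤ (b 2 + 1) * (1 - d) :=
    mul_nonneg (by linarith [hone 2]) (by linarith)
  have key : 2 * ((b 0 - b 2) * (b 1 - 1)) + 2 * ((b 2 - 1) * (b 1 - b 2)) +
      (a - b 0 - b 1 - b 2) ^ 2 + 2 * ((a - b 0 - b 1 - b 2) * (b 0 - b 2)) +
      2 * ((a - b 0 - b 1 - b 2) * (b 1 - b 2)) +
      3 * ((a - b 0 - b 1 - b 2) * (b 2 - 1)) +
      ((b 3 - 1) * (b 2 - b 3) + (b 4 - 1) * (b 2 - b 4) + (b 5 - 1) * (b 2 - b 5) +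
        (b 6 - 1) * (b 2 - b 6) + (b 7 - 1) * (b 2 - b 7) + (b 8 - 1) * (b 2 - b 8) +
        (b 9 - 1) * (b 2 - b 9)) +
      (b 2 + 1) * (1 - d) = -3 := by
    linear_combination hsq' - (b 2 + 1) * hsum'
  linarith [p1, p2, p3, p4, p5, p6, p7, t3, t4, t5, t6, t7, t8, t9, key]
end

section
/- Let (M,ω) be a closed symplectic 4-manifold with b^+ = 1, W a connected embedded symplectic surface in M satisfying the adjunction formula [W]·[W] + 2 - 2g(W) = -K_ω·[W], and A ∈ H_2(M,Z) with (A - K_ω)·[W] > 0, A·A ≥ 0, and A·[ω] ≥ 0. Then A·[W] ≥ 0; and if A·[W] = 0, then either [W]·[W] = 0 and A = λ[W] up to torsion, or W is an exceptional sphere (g(W) = 0 and [W]·[W] = -1). -/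
/-- Positivity of intersection with a symplectic surface in a b⁺ = 1 manifold.
H₂ is encoded as an abelian group with a symmetric bi-additive intersection
pairing `form`; the condition b⁺ = 1 is encoded by the light cone lemma
(`hlc`, `hlc0`), with `w` the class of the symplectic form, `K` the canonical
class, `W` the class of a connected embedded symplectic surface of genus `g`
(so the adjunction formula `hadj` holds and `W` pairs positively with `w`).
If (A - K)·W > 0, A·A ≥ 0 and A·w ≥ 0 then A·W ≥ 0, and if A·W = 0 then
either W·W = 0 and A is proportional to W up to torsion, or W is an
exceptional sphere (g = 0 and W·W = -1). -/
theorem stmt10 (H : Type*) [AddCommGroup H]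
    (form : H → H → ℤ)
    (hadd : ∀ x y z : H, form (x + y) z = form x z + form y z)
    (hsymm : ∀ x y : H, form x y = form y x)
    (K W A w : H) (g : ℕ)
    -- light cone lemma, positivity part
    (hlc : ∀ x y : H, 0 ≤ form x x → 0 ≤ form y y → 0 ≤ form x w → 0 < form y w →
      0 ≤ form x y)
    -- light cone lemma, equality part
    (hlc0 : ∀ x y : H, 0 ≤ form x x → 0 ≤ form y y → 0 ≤ form x w → 0 < form y w →
      form x y = 0 → form x x = 0 ∧ form y y = 0 ∧
        ∃ p q : ℤ, q ≠ 0 ∧ ∃ n : ℤ, n ≠ 0 ∧ n • (q • x - p • y) = 0)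
    -- W is symplectic
    (hWsymp : 0 < form W w)
    -- adjunction formula for the embedded symplectic surface W of genus g
    (hadj : form W W + 2 - 2 * (g : ℤ) = - form K W)
    -- hypotheses on A
    (hAK : 0 < form A W - form K W)
    (hAA : 0 ≤ form A A)
    (hAw : 0 ≤ form A w) :
    0 ≤ form A W ∧
      (form A W = 0 →
        (form W W = 0 ∧ ∃ p q : ℤ, q ≠ 0 ∧ ∃ n : ℤ, n ≠ 0 ∧ n • (q • A - p • W) = 0) ∨
        (g = 0 ∧ form W W = -1)) := by
  rcases le_or_gt 0 (form W W) with hWW | hWW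
  · refine ⟨hlc A W hAA hWW hAw hWsymp, fun h0 => ?_⟩
    obtain ⟨_, hW0, hprop⟩ := hlc0 A W hAA hWW hAw hWsymp h0
    exact Or.inl ⟨hW0, hprop⟩
  · constructor
    · omega
    · intro h0
      right
      constructor
      · omega
      · omega
end

section
/- Suppose integers b < 0 and c_1, ..., c_k satisfy: Σ c_i^2 = l, 2b + Σ c_i(c_i+1) ≤ 2, and there exist reals e_1, ..., e_k with |e_i| < 1, e_i < 0 and b - Σ e_i c_i > 0. Then c_i ∈ {-1, 0, 1} for all i, and moreover b = 1 - #{i : c_i = 1}. -/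
lemma aux_sq_max (c : ℤ) : 2 * max c 0 ≤ c ^ 2 + c := by
  rcases le_or_gt 0 c with h | h
  · rw [max_eq_left h]
    rcases le_or_gt 1 c with h1 | h1
    · nlinarith
    · have : c = 0 := by omega
      simp [this]
  · rw [max_eq_right h.le]
    have h1 : c + 1 ≤ 0 := h
    nlinarith [mul_nonneg (neg_nonneg.mpr h.le) (neg_nonneg.mpr h1)]

/-- The b < 0 case of Lemma 6.2: if Σ c_i² = l, 2b + Σ c_i(c_i+1) ≤ 2, and
there are reals e_i with |e_i| < 1, e_i < 0, b - Σ e_i c_i > 0, then each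
c_i ∈ {-1, 0, 1} and b = 1 - #{i : c_i = 1}. -/
theorem stmt12 (k : ℕ) (b l : ℤ) (c : Fin k → ℤ) (e : Fin k → ℝ)
    (hb : b < 0)
    (hsq : ∑ i, (c i) ^ 2 = l)
    (hineq : 2 * b + (∑ i, ((c i) ^ 2 + c i)) ≤ 2)
    (he1 : ∀ i, |e i| < 1)
    (he2 : ∀ i, e i < 0)
    (hpos : (0 : ℝ) < (b : ℝ) - ∑ i, e i * (c i : ℝ)) :
    (∀ i, c i = -1 ∨ c i = 0 ∨ c i = 1) ∧
    b = 1 - ((Finset.univ.filter (fun i => c i = 1)).card : ℤ) := by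
  set Q : ℤ := ∑ i, max (c i) 0 with hQ
  -- Step 1: b ≥ 1 - Q
  have hterm : ∀ i : Fin k, -((max (c i) 0 : ℤ) : ℝ) ≤ e i * (c i : ℝ) := by
    intro i
    rcases le_or_gt (c i) 0 with h | h
    · rw [max_eq_right h]
      push_cast
      have : (c i : ℝ) ≤ 0 := by exact_mod_cast h
      nlinarith [he2 i]
    · rw [max_eq_left h.le]
      have hc : (0:ℝ) < (c i : ℝ) := by exact_mod_cast h
      have := (abs_lt.mp (he1 i)).1
      nlinarith
  have hsum1 : -((Q : ℤ) : ℝ) ≤ ∑ i, e i * (c i : ℝ) := by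
    rw [hQ]
    push_cast
    rw [← Finset.sum_neg_distrib]
    apply Finset.sum_le_sum
    intro i _
    have := hterm i
    push_cast at this ⊢
    exact this
  have hbQ : 1 - Q ≤ b := by
    have : -((Q : ℤ) : ℝ) < (b : ℝ) := lt_of_le_of_lt hsum1 (by linarith)
    have : -Q < b := by exact_mod_cast this
    omega
  -- Step 2: Σ (c² + c) ≥ 2Q
  have hsum2 : 2 * Q ≤ ∑ i, ((c i) ^ 2 + c i) := by
    rw [hQ, Finset.mul_sum]
    exact Finset.sum_le_sum fun i _ => aux_sq_max (c i)
  have hbQ2 : b = 1 - Q := by omega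
  have hsumeq : ∑ i, ((c i) ^ 2 + c i) = 2 * Q := by omega
  -- Step 3: each term equality
  have heach : ∀ i : Fin k, (c i) ^ 2 + c i = 2 * max (c i) 0 := by
    have h0 : ∑ i, ((c i) ^ 2 + c i - 2 * max (c i) 0) = 0 := by
      rw [Finset.sum_sub_distrib, hsumeq, hQ, Finset.mul_sum, sub_self]
    have := (Finset.sum_eq_zero_iff_of_nonneg (fun i _ =>
      sub_nonneg.mpr (aux_sq_max (c i)))).mp h0
    intro i
    have := this i (Finset.mem_univ i)
    omega
  have hone : ∀ i, c i = -1 ∨ c i = 0 ∨ c i = 1 := by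
    intro i
    have h := heach i
    rcases le_or_gt 0 (c i) with hc | hc
    · rw [max_eq_left hc] at h
      have h2 : c i * (c i - 1) = 0 := by ring_nf; nlinarith
      rcases mul_eq_zero.mp h2 with h3 | h3 <;> omega
    · rw [max_eq_right hc.le] at h
      have h2 : c i * (c i + 1) = 0 := by ring_nf; nlinarith
      rcases mul_eq_zero.mp h2 with h3 | h3 <;> omega
  refine ⟨hone, ?_⟩
  have hcard : Q = ((Finset.univ.filter (fun i => c i = 1)).card : ℤ) := by
    rw [Finset.card_filter, hQ]
    push_cast
    apply Finset.sum_congr rfl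
    intro i _
    rcases hone i with h | h | h <;> simp [h]
  omega
end

section
/- If A ∈ H_2(CP^2 # k CP^2-bar, Z) is a reduced class (b_1 ≥ ... ≥ b_k ≥ 0, a ≥ b_1 + b_2 + b_3) with negative square A·A < 0, then k ≥ 10. -/
/-- A reduced class in CP² # k CP²-bar with negative square requires k ≥ 10. -/
theorem stmt16 (k : ℕ) (a : ℤ) (b : Fin k → ℤ)
    (hmono : ∀ i j : Fin k, i ≤ j → b j ≤ b i)
    (hnonneg : ∀ i, 0 ≤ b i)
    (hred : (if h : 0 < k then b ⟨0, h⟩ else 0) + (if h : 1 < k then b ⟨1, h⟩ else 0)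
        + (if h : 2 < k then b ⟨2, h⟩ else 0) ≤ a)
    (hneg : a ^ 2 < ∑ i, (b i) ^ 2) :
    10 ≤ k := by
  by_contra hlt
  push_neg at hlt
  have hk : k ≤ 9 := by omega
  set c : ℕ → ℤ := fun n => if h : n < k then b ⟨n, h⟩ else 0 with hc
  have hcnn : ∀ n, 0 ≤ c n := by
    intro n
    simp only [hc]
    split
    · exact hnonneg _
    · exact le_refl 0
  have hcmono : ∀ m n : ℕ, m ≤ n → c n ≤ c m := by
    intro m n hmn
    simp only [hc]
    split
    · rename_i hn
      rw [dif_pos (lt_of_le_of_lt hmn hn)]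
      exact hmono ⟨m, _⟩ ⟨n, hn⟩ hmn
    · rename_i hn
      split
      · exact hnonneg _
      · exact le_refl 0
  have hred' : c 0 + c 1 + c 2 ≤ a := hred
  have hsum : ∑ i : Fin k, (b i) ^ 2 ≤ ∑ n ∈ Finset.range 9, (c n) ^ 2 := by
    have h1 : ∑ i : Fin k, (b i) ^ 2 = ∑ n ∈ Finset.range k, (c n) ^ 2 := by
      rw [← Fin.sum_univ_eq_sum_range (fun n => (c n) ^ 2) k]
      refine Finset.sum_congr rfl ?_
      intro i _
      simp [hc, i.isLt]
    rw [h1]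
    refine Finset.sum_le_sum_of_subset_of_nonneg ?_ ?_
    · exact Finset.range_subset_range.2 hk
    · intro i _ _; positivity
  have hexp : ∑ n ∈ Finset.range 9, (c n) ^ 2 =
      (c 0)^2 + (c 1)^2 + (c 2)^2 + (c 3)^2 + (c 4)^2 + (c 5)^2 + (c 6)^2 + (c 7)^2 + (c 8)^2 := by
    simp [Finset.sum_range_succ]
  rw [hexp] at hsum
  have h01 := hcmono 0 1 (by norm_num)
  have h12 := hcmono 1 2 (by norm_num)
  have h23 := hcmono 2 3 (by norm_num)
  have h24 := hcmono 2 4 (by norm_num)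
  have h25 := hcmono 2 5 (by norm_num)
  have h26 := hcmono 2 6 (by norm_num)
  have h27 := hcmono 2 7 (by norm_num)
  have h28 := hcmono 2 8 (by norm_num)
  nlinarith [hcnn 0, hcnn 1, hcnn 2, hcnn 3, hcnn 4, hcnn 5, hcnn 6, hcnn 7, hcnn 8,
    mul_nonneg (sub_nonneg.2 h23) (add_nonneg (hcnn 2) (hcnn 3)),
    mul_nonneg (sub_nonneg.2 h24) (add_nonneg (hcnn 2) (hcnn 4)),
    mul_nonneg (sub_nonneg.2 h25) (add_nonneg (hcnn 2) (hcnn 5)),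
    mul_nonneg (sub_nonneg.2 h26) (add_nonneg (hcnn 2) (hcnn 6)),
    mul_nonneg (sub_nonneg.2 h27) (add_nonneg (hcnn 2) (hcnn 7)),
    mul_nonneg (sub_nonneg.2 h28) (add_nonneg (hcnn 2) (hcnn 8)),
    mul_nonneg (sub_nonneg.2 (h12.trans h01)) (hcnn 2),
    mul_nonneg (sub_nonneg.2 h12) (hcnn 2),
    mul_nonneg (sub_nonneg.2 (h12.trans h01)) (sub_nonneg.2 h12),
    mul_self_le_mul_self (add_nonneg (add_nonneg (hcnn 0) (hcnn 1)) (hcnn 2)) hred']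
end
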